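/- For every complex symmetric n×n matrix M there exists a unitary matrix U such that Uᵀ M U is diagonal with real nonnegative entries (Takagi/Schur decomposition). -/

import Mathlib

open Matrix

/-!
A complex symmetric `M` has a unit vector `x` with `M x = σ x̄` and `σ ≥ 0`: if `M Mᴴ w = σ² w`,
then `x = Mᴴ w + σ w̄` works, or `i w̄` when that vanishes. Completing `x` to a unitary `U`, the
symmetric matrix `Uᵀ M U` has first column `σ e₁`, hence also first row `σ e₁ᵀ`, so it splits
as a block sum `σ ⊕ M'` and induction on the size applies to `M'`.
-/

namespace Matrix

variable {ι κ : Type*} [Fintype ι]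

theorem IsSymm.transpose_mul_mul {α : Type*} [CommSemiring α] {M : Matrix ι ι α}
    (hM : M.IsSymm) (U : Matrix ι κ α) : (Uᵀ * M * U).IsSymm := by
  rw [IsSymm, transpose_mul, transpose_mul, transpose_transpose, hM.eq, Matrix.mul_assoc]

theorem IsSymm.mulVec_star {M : Matrix ι ι ℂ} (hM : M.IsSymm) (v : ι → ℂ) :
    M *ᵥ star v = star (Mᴴ *ᵥ v) := by
  rw [star_mulVec, conjTranspose_conjTranspose, ← mulVec_transpose, hM]

theorem transpose_mul_mul_mulVec_eq_smul_star [DecidableEq ι] {M U : Matrix ι ι ℂ}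
    (hU : U ∈ unitaryGroup ι ℂ) {v : ι → ℂ} {σ : ℝ} (h : M *ᵥ (U *ᵥ v) = σ • star (U *ᵥ v)) :
    (Uᵀ * M * U) *ᵥ v = σ • star v := by
  rw [← mulVec_mulVec, ← mulVec_mulVec, h, mulVec_smul, mulVec_transpose, star_mulVec,
    vecMul_vecMul, ← star_eq_conjTranspose, mem_unitaryGroup_iff'.mp hU, vecMul_one]

theorem IsSymm.mulVec_eq_smul_star_of_mul_conjTranspose_mulVec {M : Matrix ι ι ℂ}
    (hM : M.IsSymm) {w : ι → ℂ} {σ : ℝ} (hw : (M * Mᴴ) *ᵥ w = (σ * σ) • w) :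
    M *ᵥ (Mᴴ *ᵥ w + σ • star w) = σ • star (Mᴴ *ᵥ w + σ • star w) := by
  rw [mulVec_add, mulVec_mulVec, hw, mulVec_smul, hM.mulVec_star, star_add, star_smul,
    star_trivial σ, star_star, smul_add, smul_smul, add_comm]

theorem IsSymm.exists_mulVec_eq_smul_star [DecidableEq ι] [Nonempty ι] {M : Matrix ι ι ℂ}
    (hM : M.IsSymm) : ∃ σ : ℝ, 0 ≤ σ ∧ ∃ x : ι → ℂ, x ≠ 0 ∧ M *ᵥ x = σ • star x := by
  have hH := isHermitian_mul_conjTranspose_self M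
  let i := Classical.arbitrary ι
  set w : ι → ℂ := (hH.eigenvectorBasis i).ofLp
  set σ := √(hH.eigenvalues i)
  have hw0 : w ≠ 0 := by simpa [w] using hH.eigenvectorBasis.orthonormal.ne_zero i
  have hw : (M * Mᴴ) *ᵥ w = (σ * σ) • w := by
    rw [hH.mulVec_eigenvectorBasis,
      Real.mul_self_sqrt (eigenvalues_self_mul_conjTranspose_nonneg M i)]
  by_cases hx : Mᴴ *ᵥ w + σ • star w = 0
  · refine ⟨σ, Real.sqrt_nonneg _, Complex.I • star w, by simpa using hw0, ?_⟩
    rw [mulVec_smul, hM.mulVec_star, eq_neg_of_add_eq_zero_left hx, star_neg, star_smul,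
      star_trivial σ, star_star, star_smul, Complex.star_def, Complex.conj_I, smul_neg, neg_smul,
      smul_neg, smul_comm, star_star]
  · exact ⟨σ, Real.sqrt_nonneg _, _, hx, hM.mulVec_eq_smul_star_of_mul_conjTranspose_mulVec hw⟩

theorem IsSymm.exists_norm_eq_one_mulVec_eq_smul_star [DecidableEq ι] [Nonempty ι]
    {M : Matrix ι ι ℂ} (hM : M.IsSymm) :
    ∃ σ : ℝ, 0 ≤ σ ∧ ∃ x : EuclideanSpace ℂ ι, ‖x‖ = 1 ∧ M *ᵥ x.ofLp = σ • star x.ofLp := by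
  obtain ⟨σ, hσ, y, hy, hMy⟩ := hM.exists_mulVec_eq_smul_star
  set x : EuclideanSpace ℂ ι := WithLp.toLp 2 y
  have hx : x ≠ 0 := by simpa [x] using hy
  refine ⟨σ, hσ, ‖x‖⁻¹ • x, ?_, ?_⟩
  · rw [norm_smul, norm_inv, norm_norm, inv_mul_cancel₀ (norm_ne_zero_iff.mpr hx)]
  · rw [WithLp.ofLp_smul, mulVec_smul, hMy, star_smul, star_trivial ‖x‖⁻¹, smul_comm]

theorem exists_unitary_mulVec_single_eq [DecidableEq ι] {𝕜 : Type*} [RCLike 𝕜]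
    {x : EuclideanSpace 𝕜 ι} (hx : ‖x‖ = 1) (i₀ : ι) :
    ∃ U ∈ unitaryGroup ι 𝕜, U *ᵥ Pi.single i₀ 1 = x.ofLp := by
  have hx : Orthonormal 𝕜 (({i₀} : Set ι).domRestrict fun _ => x) :=
    orthonormal_subsingleton_iff.mpr fun _ => hx
  obtain ⟨b, hb⟩ := hx.exists_orthonormalBasis_extension_of_card_eq (by simp)
  refine ⟨(EuclideanSpace.basisFun ι 𝕜).toBasis.toMatrix b,
    (EuclideanSpace.basisFun ι 𝕜).toMatrix_orthonormalBasis_mem_unitary b, ?_⟩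
  ext i
  rw [mulVec_single_one, col_apply, Module.Basis.toMatrix_apply, hb i₀ rfl]
  simp

variable [DecidableEq ι] [Fintype κ] [DecidableEq κ]

def IsTakagiDiagonalizable (M : Matrix ι ι ℂ) : Prop :=
  ∃ U ∈ unitaryGroup ι ℂ, ∃ d : ι → ℝ, (∀ j, 0 ≤ d j) ∧ Uᵀ * M * U = diagonal fun j => (d j : ℂ)

namespace IsTakagiDiagonalizable

theorem of_isEmpty [IsEmpty ι] (M : Matrix ι ι ℂ) : M.IsTakagiDiagonalizable :=
  ⟨1, one_mem _, 0, fun _ => le_rfl, Subsingleton.elim _ _⟩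

theorem diagonal {d : ι → ℝ} (hd : ∀ j, 0 ≤ d j) :
    (diagonal fun j => (d j : ℂ)).IsTakagiDiagonalizable :=
  ⟨1, one_mem _, d, hd, by simp⟩

theorem of_unitary_congr {M U : Matrix ι ι ℂ} (hU : U ∈ unitaryGroup ι ℂ)
    (h : (Uᵀ * M * U).IsTakagiDiagonalizable) : M.IsTakagiDiagonalizable := by
  obtain ⟨V, hV, d, hd, hdiag⟩ := h
  refine ⟨U * V, mul_mem hU hV, d, hd, ?_⟩
  rw [← hdiag, transpose_mul]
  simp only [Matrix.mul_assoc]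

theorem of_submatrix_equiv {M : Matrix ι ι ℂ} (e : κ ≃ ι)
    (h : (M.submatrix e e).IsTakagiDiagonalizable) : M.IsTakagiDiagonalizable := by
  obtain ⟨U, hU, d, hd, hdiag⟩ := h
  refine ⟨U.submatrix e.symm e.symm, ?_, d ∘ e.symm, fun j => hd _, ?_⟩
  · rw [mem_unitaryGroup_iff', star_eq_conjTranspose, conjTranspose_submatrix,
      submatrix_mul_equiv, ← star_eq_conjTranspose, mem_unitaryGroup_iff'.mp hU,
      submatrix_one_equiv]
  · rw [show M = (M.submatrix e e).submatrix e.symm e.symm by simp, transpose_submatrix,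
      submatrix_mul_equiv, submatrix_mul_equiv, hdiag, submatrix_diagonal_equiv]
    rfl

theorem fromBlocks {A : Matrix ι ι ℂ} {D : Matrix κ κ ℂ} (hA : A.IsTakagiDiagonalizable)
    (hD : D.IsTakagiDiagonalizable) : (fromBlocks A 0 0 D).IsTakagiDiagonalizable := by
  obtain ⟨U, hU, d, hd, hdiagA⟩ := hA
  obtain ⟨V, hV, d', hd', hdiagD⟩ := hD
  refine ⟨Matrix.fromBlocks U 0 0 V, ?_, Sum.elim d d', fun j => ?_, ?_⟩
  · rw [mem_unitaryGroup_iff', star_eq_conjTranspose, fromBlocks_conjTranspose,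
      fromBlocks_multiply]
    simp [← star_eq_conjTranspose, mem_unitaryGroup_iff'.mp hU, mem_unitaryGroup_iff'.mp hV]
  · cases j with
    | inl j => exact hd j
    | inr j => exact hd' j
  · rw [fromBlocks_transpose, fromBlocks_multiply, fromBlocks_multiply]
    simp [hdiagA, hdiagD, fromBlocks_diagonal]

theorem of_mulVec_single {N : Matrix ι ι ℂ} (hN : N.IsSymm) {i₀ : ι} {σ : ℝ} (hσ : 0 ≤ σ)
    (hNi₀ : N *ᵥ Pi.single i₀ 1 = σ • Pi.single i₀ 1)
    (h : (N.toBlock (· ≠ i₀) (· ≠ i₀)).IsTakagiDiagonalizable) : N.IsTakagiDiagonalizable := by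
  have hcol (i : ι) : N i i₀ = if i = i₀ then (σ : ℂ) else 0 := by
    simpa [mulVec_single_one, Pi.single_apply] using congrFun hNi₀ i
  refine of_submatrix_equiv (Equiv.sumCompl (· = i₀)) ?_
  have hblocks : N.submatrix (Equiv.sumCompl (· = i₀)) (Equiv.sumCompl (· = i₀)) =
      Matrix.fromBlocks (Matrix.diagonal fun _ => (σ : ℂ)) 0 0 (N.toBlock (· ≠ i₀) (· ≠ i₀)) := by
    ext (⟨i, rfl⟩ | ⟨i, hi⟩) (⟨j, hj⟩ | ⟨j, hj⟩)
    · simp [hcol, hj]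
    · simp [← hN.apply i, hcol, hj]
    · simp [hcol, hj, hi]
    · simp
  rw [hblocks]
  exact (diagonal fun _ => hσ).fromBlocks h

end IsTakagiDiagonalizable

theorem IsSymm.isTakagiDiagonalizable {M : Matrix ι ι ℂ} (hM : M.IsSymm) :
    M.IsTakagiDiagonalizable := by
  induction h : Fintype.card ι generalizing ι with
  | zero =>
    have := Fintype.card_eq_zero_iff.mp h
    exact .of_isEmpty M
  | succ n ih =>
    have : Nonempty ι := Fintype.card_pos_iff.mp (by omega)
    let i₀ := Classical.arbitrary ι
    obtain ⟨σ, hσ, x, hx, hMx⟩ := hM.exists_norm_eq_one_mulVec_eq_smul_star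
    obtain ⟨U, hU, hUx⟩ := exists_unitary_mulVec_single_eq hx i₀
    have hN := hM.transpose_mul_mul U
    refine .of_unitary_congr hU (.of_mulVec_single (i₀ := i₀) hN hσ ?_ (ih (hN.submatrix _) ?_))
    · rw [transpose_mul_mul_mulVec_eq_smul_star hU (by rwa [hUx]), Pi.star_single, star_one]
    · simp [Fintype.card_subtype_compl, h]

end Matrix

theorem takagi_decomposition (n : ℕ) (M : Matrix (Fin n) (Fin n) ℂ) (hM : M = Mᵀ) :
    ∃ U : Matrix (Fin n) (Fin n) ℂ, U ∈ Matrix.unitaryGroup (Fin n) ℂ ∧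
      ∃ d : Fin n → ℝ, (∀ j, 0 ≤ d j) ∧
        Uᵀ * M * U = Matrix.diagonal (fun j => (d j : ℂ)) :=
  IsSymm.isTakagiDiagonalizable hM.symm
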